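/- Let n ≥ s ≥ 4, a ≥ 2, 2 ≤ t ≤ s/2, and q = a·C(s,2) - t. Suppose G = ([n], w) is a multigraph in which every s-element vertex set spans total multiplicity at most q, and suppose Y is an (s-t+1)-element vertex set with total internal multiplicity S(Y) ≥ a·C(s-t+1, 2). Then there exists a set Y' with Y ⊆ Y' ⊆ [n] and s-t+1 ≤ |Y'| ≤ s-1 such that for every vertex z ∉ Y', the sum of multiplicities from z to Y' is at most a·|Y'| - 2. -/
import Mathlib


open Finset

def pairs (n : ℕ) (X : Finset (Fin n)) : Finset (Fin n × Fin n) :=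
  (X ×ˢ X).filter (fun p => p.1 < p.2)

def mgS (n : ℕ) (w : Fin n → Fin n → ℕ) (X : Finset (Fin n)) : ℕ :=
  ∑ p ∈ pairs n X, w p.1 p.2

def mgP (n : ℕ) (w : Fin n → Fin n → ℕ) (X : Finset (Fin n)) : ℕ :=
  ∏ p ∈ pairs n X, w p.1 p.2

def IsNSQ (n s q : ℕ) (w : Fin n → Fin n → ℕ) : Prop :=
  ∀ X : Finset (Fin n), X.card = s → mgS n w X ≤ q

lemma mgS_eq (n : ℕ) (w : Fin n → Fin n → ℕ) (X : Finset (Fin n)) :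
    mgS n w X = ∑ i ∈ X, ∑ j ∈ X, if i < j then w i j else 0 := by
  unfold mgS pairs
  rw [Finset.sum_filter, Finset.sum_product]

lemma mgS_insert (n : ℕ) (w : Fin n → Fin n → ℕ)
    (hsym : ∀ i j, w i j = w j i) (Z : Finset (Fin n)) (z : Fin n) (hz : z ∉ Z) :
    mgS n w (insert z Z) = mgS n w Z + ∑ y ∈ Z, w z y := by
  rw [mgS_eq, mgS_eq, Finset.sum_insert hz]
  simp only [Finset.sum_insert hz]
  rw [Finset.sum_add_distrib]
  have hzz : (if z < z then w z z else 0) = 0 := by simp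
  rw [hzz]
  have key : ∑ j ∈ Z, ((if z < j then w z j else 0) + (if j < z then w j z else 0))
      = ∑ j ∈ Z, w z j := by
    apply Finset.sum_congr rfl
    intro j hj
    rcases lt_trichotomy z j with h | h | h
    · simp [h, not_lt.mpr h.le]
    · exact absurd h (by rintro rfl; exact hz hj)
    · simp [h, not_lt.mpr h.le, hsym z j]
  rw [Finset.sum_add_distrib] at key
  omega

theorem dense_set_extension (n s a t : ℕ) (hs : 4 ≤ s) (hn : s ≤ n) (ha : 2 ≤ a)
    (ht2 : 2 ≤ t) (hts : 2 * t ≤ s)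
    (w : Fin n → Fin n → ℕ) (hsym : ∀ i j, w i j = w j i)
    (hG : IsNSQ n s (a * Nat.choose s 2 - t) w)
    (Y : Finset (Fin n)) (hY : Y.card = s - t + 1)
    (hSY : a * Nat.choose (s - t + 1) 2 ≤ mgS n w Y) :
    ∃ Y' : Finset (Fin n), Y ⊆ Y' ∧ s - t + 1 ≤ Y'.card ∧ Y'.card ≤ s - 1 ∧
      ∀ z : Fin n, z ∉ Y' → ∑ y ∈ Y', w z y ≤ a * Y'.card - 2 := by
  by_contra hcon
  push_neg at hcon
  -- from the negation: every admissible Y' has a heavy vertex z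
  have hstep : ∀ Z : Finset (Fin n), Y ⊆ Z → s - t + 1 ≤ Z.card → Z.card ≤ s - 1 →
      ∃ z : Fin n, z ∉ Z ∧ a * Z.card - 1 ≤ ∑ y ∈ Z, w z y := by
    intro Z h1 h2 h3
    obtain ⟨z, hz1, hz2⟩ := hcon Z h1 h2 h3
    refine ⟨z, hz1, ?_⟩
    omega
  have hts' : t ≤ s := by omega
  -- greedy extension
  have main : ∀ j : ℕ, j ≤ t - 1 → ∃ Z : Finset (Fin n), Y ⊆ Z ∧
      Z.card = s - t + 1 + j ∧ a * Nat.choose (s - t + 1 + j) 2 ≤ mgS n w Z + j := by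
    intro j
    induction j with
    | zero => intro _; exact ⟨Y, Finset.Subset.refl Y, by omega, by simpa using hSY⟩
    | succ j ih =>
      intro hj
      obtain ⟨Z, hZ1, hZ2, hZ3⟩ := ih (by omega)
      have hcard : Z.card ≤ s - 1 := by omega
      obtain ⟨z, hz1, hz2⟩ := hstep Z hZ1 (by omega) hcard
      have hins := mgS_insert n w hsym Z z hz1
      refine ⟨insert z Z, hZ1.trans (Finset.subset_insert z Z), ?_, ?_⟩
      · rw [Finset.card_insert_of_notMem hz1]; omega
      · set m := s - t + 1 + j with hm
        have hch : Nat.choose (m + 1) 2 = m + Nat.choose m 2 := by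
          rw [Nat.choose_succ_succ]
          simp [Nat.choose_one_right]
        have hm1 : s - t + 1 + (j + 1) = m + 1 := by omega
        rw [hm1, hch, Nat.mul_add, hins]
        rw [hZ2] at hz2
        have ham : 2 ≤ a * m := by nlinarith
        omega
  obtain ⟨Z, hZ1, hZ2, hZ3⟩ := main (t - 1) le_rfl
  have hZs : Z.card = s := by omega
  have hq := hG Z hZs
  have hcs : s ≤ Nat.choose s 2 := by
    have h2 : Nat.choose s 2 * 2 = s * (s - 1) := by
      rw [Nat.choose_two_right]
      exact Nat.div_mul_cancel (Nat.even_mul_pred_self s).two_dvd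
    have h4 : s * 2 ≤ s * (s - 1) := Nat.mul_le_mul_left s (by omega)
    linarith
  have : s - t + 1 + (t - 1) = s := by omega
  rw [this] at hZ3
  have : t ≤ a * Nat.choose s 2 := by nlinarith
  omega
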